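/- Let β, γ ∈ Λ. (i) For all a ∈ K, ω_{a,β} ∼ ω_{a,γ} if and only if β ∼_sme γ. (ii) Let μ ∈ T be an inner node and φ ∈ KP(μ); if β, γ > μ(φ), then [μ; φ, β] ∼ [μ; φ, γ] if and only if β ∼_sme γ. (iii) Let A = (ρ_i)_{i∈A} be an essential continuous family in T and φ ∈ KP_∞(A); if β, γ > ρ_i(φ) for all i ∈ A, then [A; φ, β] ∼ [A; φ, γ] if and only if β ∼_sme γ. -/

import Mathlib

open Polynomial

namespace MLV

variable {K : Type*} [Field K] {Λ : Type*} [AddCommGroup Λ] [LinearOrder Λ] [IsOrderedAddMonoid Λ]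

/-- A valuation on the field `K` with values in `Λ∞ = WithTop Λ`. -/
structure FieldVal (K : Type*) (Λ : Type*) [Field K] [AddCommGroup Λ] [LinearOrder Λ] [IsOrderedAddMonoid Λ] where
  v : K → WithTop Λ
  map_one' : v 1 = 0
  map_zero' : v 0 = ⊤
  ne_top' : ∀ a : K, a ≠ 0 → v a ≠ ⊤
  map_mul' : ∀ a b : K, v (a * b) = v a + v b
  map_add' : ∀ a b : K, min (v a) (v b) ≤ v (a + b)

/-- `μ` is a node of the tree `T = T(Λ)`: a valuation on `K[x]` with values in `Λ∞`
whose restriction to `K` is `v`. -/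
def IsValT (v : FieldVal K Λ) (μ : Polynomial K → WithTop Λ) : Prop :=
  μ 1 = 0 ∧ μ 0 = ⊤ ∧ (∀ f g : Polynomial K, μ (f * g) = μ f + μ g) ∧
    (∀ f g : Polynomial K, min (μ f) (μ g) ≤ μ (f + g)) ∧
    ∀ a : K, μ (C a) = v.v a

/-- `g ∼_μ h` : `μ(g - h) > μ(g)`. -/
def MuEquiv (μ : Polynomial K → WithTop Λ) (g h : Polynomial K) : Prop :=
  μ g < μ (g - h)

/-- `h ∣_μ g` : `g ∼_μ f * h` for some `f`. -/
def MuDvd (μ : Polynomial K → WithTop Λ) (h g : Polynomial K) : Prop :=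
  ∃ f : Polynomial K, MuEquiv μ g (f * h)

/-- `g ∈ K[x] \ K` is `μ`-minimal if it `μ`-divides no nonzero polynomial of smaller degree. -/
def IsMuMinimal (μ : Polynomial K → WithTop Λ) (g : Polynomial K) : Prop :=
  0 < g.natDegree ∧
    ∀ f : Polynomial K, f ≠ 0 → f.degree < g.degree → ¬ MuDvd μ g f

/-- `g` is `μ`-irreducible. -/
def IsMuIrreducible (μ : Polynomial K → WithTop Λ) (g : Polynomial K) : Prop :=
  μ g ≠ ⊤ ∧ (¬ ∃ f : Polynomial K, MuEquiv μ (f * g) 1) ∧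
    ∀ f h : Polynomial K, MuDvd μ g (f * h) → MuDvd μ g f ∨ MuDvd μ g h

/-- A (Maclane-Vaquié) key polynomial for `μ`. -/
def IsKeyPol (μ : Polynomial K → WithTop Λ) (φ : Polynomial K) : Prop :=
  φ.Monic ∧ IsMuMinimal μ φ ∧ IsMuIrreducible μ φ

/-- An inner node: a valuation admitting key polynomials. -/
def IsInnerNode (μ : Polynomial K → WithTop Λ) : Prop :=
  ∃ φ : Polynomial K, IsKeyPol μ φ

/-- `deg(μ)`: the minimal degree of a key polynomial for `μ`. -/
noncomputable def degOf (μ : Polynomial K → WithTop Λ) : ℕ :=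
  sInf {n : ℕ | ∃ φ : Polynomial K, IsKeyPol μ φ ∧ φ.natDegree = n}

/-- A key polynomial of minimal degree. -/
def IsMinKeyPol (μ : Polynomial K → WithTop Λ) (φ : Polynomial K) : Prop :=
  IsKeyPol μ φ ∧ ∀ ψ : Polynomial K, IsKeyPol μ ψ → φ.natDegree ≤ ψ.natDegree

/-- the class `[φ]_μ` of key polynomials `μ`-equivalent to `φ`. -/
def KeyPolClass (μ : Polynomial K → WithTop Λ) (φ : Polynomial K) : Set (Polynomial K) :=
  {ψ : Polynomial K | IsKeyPol μ ψ ∧ MuEquiv μ ψ φ}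

/-- The coefficient `a_s` of the `φ`-expansion `f = Σ_s a_s φ^s` (for `φ` monic nonconstant). -/
noncomputable def expCoeff (φ f : Polynomial K) (s : ℕ) : Polynomial K :=
  (f /ₘ φ ^ s) %ₘ φ

/-- The augmented valuation `[μ; φ, γ]`, acting on `φ`-expansions by
`ν(Σ_s a_s φ^s) = min_s (μ(a_s) + s γ)`. -/
noncomputable def augVal (μ : Polynomial K → WithTop Λ) (φ : Polynomial K)
    (γ : WithTop Λ) (f : Polynomial K) : WithTop Λ :=
  (Finset.range (f.natDegree + 1)).inf'
    (Finset.nonempty_range_iff.mpr (Nat.succ_ne_zero _))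
    fun s => μ (expCoeff φ f s) + s • γ

/-- The depth-zero valuation `ω_{a,δ}`, acting on `(x-a)`-expansions by
`ω(Σ_s a_s (x-a)^s) = min_s (v(a_s) + s δ)`. -/
noncomputable def omegaVal (v : FieldVal K Λ) (a : K) (δ : WithTop Λ)
    (f : Polynomial K) : WithTop Λ :=
  (Finset.range (f.natDegree + 1)).inf'
    (Finset.nonempty_range_iff.mpr (Nat.succ_ne_zero _))
    fun s => v.v ((taylor a f).coeff s) + s • δ

/-- The tangent direction `t(μ,ν)`: monic polynomials of minimal degree with `μ(φ) < ν(φ)`. -/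
def TangentDir (μ ν : Polynomial K → WithTop Λ) : Set (Polynomial K) :=
  {φ : Polynomial K | φ.Monic ∧ μ φ < ν φ ∧
    ∀ ψ : Polynomial K, ψ.Monic → μ ψ < ν ψ → φ.natDegree ≤ ψ.natDegree}

/-- The set of finite values of `μ`. -/
def valSet (μ : Polynomial K → WithTop Λ) : Set Λ :=
  {γ : Λ | ∃ f : Polynomial K, μ f = (γ : WithTop Λ)}

/-- The value group `Γ_μ`. -/
def valGroup (μ : Polynomial K → WithTop Λ) : AddSubgroup Λ :=
  AddSubgroup.closure (valSet μ)

/-- `Γ = v(K^*)` as a subset of `Λ`. -/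
def gammaSet (v : FieldVal K Λ) : Set Λ :=
  {γ : Λ | ∃ a : K, v.v a = (γ : WithTop Λ)}

/-- The value group `Γ` of the base field valuation. -/
def baseGroup (v : FieldVal K Λ) : AddSubgroup Λ :=
  AddSubgroup.closure (gammaSet v)

/-- `μ` is commensurable over `v` : `Γ_μ/Γ` is torsion. -/
def IsCommensurable (v : FieldVal K Λ) (μ : Polynomial K → WithTop Λ) : Prop :=
  ∀ γ : Λ, γ ∈ valGroup μ → ∃ n : ℕ, 0 < n ∧ n • γ ∈ baseGroup v

/-- `Γ_μ^0 = {μ(a) : a ∈ K[x], 0 ≤ deg(a) < deg(μ)}`. -/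
noncomputable def degZeroSet (μ : Polynomial K → WithTop Λ) : Set Λ :=
  {δ : Λ | ∃ a : Polynomial K, a ≠ 0 ∧ a.natDegree < degOf μ ∧ μ a = (δ : WithTop Λ)}

/-- Equivalence of valuations: an order-preserving isomorphism `ι : Γ_μ → Γ_ν`
with `ν = ι ∘ μ`. -/
def ValEquiv (μ ν : Polynomial K → WithTop Λ) : Prop :=
  ∃ ι : valGroup μ ≃+ valGroup ν,
    Monotone ι ∧ (∀ f : Polynomial K, μ f = ⊤ ↔ ν f = ⊤) ∧
    ∀ (f : Polynomial K) (γ : Λ) (h : μ f = (γ : WithTop Λ)),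
      ν f = ((ι ⟨γ, AddSubgroup.subset_closure ⟨f, h⟩⟩ : Λ) : WithTop Λ)

/-- `β ∼_sme γ` : an order-preserving isomorphism `⟨Γ,β⟩ → ⟨Γ,γ⟩` fixing `Γ`
and mapping `β` to `γ`. -/
def SmeEquiv (v : FieldVal K Λ) (β γ : Λ) : Prop :=
  ∃ ι : (AddSubgroup.closure (gammaSet v ∪ {β}) : AddSubgroup Λ) ≃+
      (AddSubgroup.closure (gammaSet v ∪ {γ}) : AddSubgroup Λ),
    Monotone ι ∧
    (∀ (a : Λ) (ha : a ∈ gammaSet v),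
      ((ι ⟨a, AddSubgroup.subset_closure (Set.mem_union_left _ ha)⟩ : Λ) = a)) ∧
    ((ι ⟨β, AddSubgroup.subset_closure (Set.mem_union_right _ rfl)⟩ : Λ) = γ)

section Families

variable {ι : Type*} [LinearOrder ι]

/-- A totally ordered family of inner nodes of `T`, indexed order-isomorphically by a
totally ordered set, containing no maximal element. -/
def IsTOFamily (v : FieldVal K Λ) (ρ : ι → Polynomial K → WithTop Λ) : Prop :=
  (∀ i, IsValT v (ρ i)) ∧ (∀ i, IsInnerNode (ρ i)) ∧ StrictMono ρ ∧
    ∀ i : ι, ∃ j : ι, i < j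

/-- `f` is `A`-stable: the values `ρ_i(f)` are eventually constant. -/
def IsStablePoly (ρ : ι → Polynomial K → WithTop Λ) (f : Polynomial K) : Prop :=
  ∃ i : ι, ∀ j : ι, i ≤ j → ρ j f = ρ i f

/-- `β` is the stable value `ρ_A(f)`. -/
def IsStableVal (ρ : ι → Polynomial K → WithTop Λ) (f : Polynomial K)
    (β : WithTop Λ) : Prop :=
  ∃ i : ι, ∀ j : ι, i ≤ j → ρ j f = β

open Classical in
/-- The stability function `ρ_A` (junk value `⊤` on unstable polynomials). -/
noncomputable def stableVal (ρ : ι → Polynomial K → WithTop Λ) (f : Polynomial K) :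
    WithTop Λ :=
  if h : ∃ β : WithTop Λ, IsStableVal ρ f β then h.choose else ⊤

/-- The family has stable degree `m`. -/
def HasStableDeg (ρ : ι → Polynomial K → WithTop Λ) (m : ℕ) : Prop :=
  ∃ i : ι, ∀ j : ι, i ≤ j → degOf (ρ j) = m

/-- A continuous family: a totally ordered family of eventually constant degree. -/
def IsContFamily (v : FieldVal K Λ) (ρ : ι → Polynomial K → WithTop Λ) : Prop :=
  IsTOFamily v ρ ∧ ∃ m : ℕ, HasStableDeg ρ m

/-- The stable group `Γ_C`: stable values of nonzero stable polynomials. -/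
def stableSet (ρ : ι → Polynomial K → WithTop Λ) : Set Λ :=
  {δ : Λ | ∃ f : Polynomial K, f ≠ 0 ∧ IsStableVal ρ f (δ : WithTop Λ)}

/-- A limit key polynomial: monic, unstable, of minimal degree among unstable polynomials. -/
def IsLimKeyPol (ρ : ι → Polynomial K → WithTop Λ) (φ : Polynomial K) : Prop :=
  φ.Monic ∧ ¬ IsStablePoly ρ φ ∧
    ∀ f : Polynomial K, ¬ IsStablePoly ρ f → φ.natDegree ≤ f.natDegree

/-- An essential continuous family: `m(C) < m_∞(C) < ∞`. -/
def IsEssential (v : FieldVal K Λ) (ρ : ι → Polynomial K → WithTop Λ) : Prop :=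
  IsTOFamily v ρ ∧
    ∃ m : ℕ, HasStableDeg ρ m ∧
      ∃ φ : Polynomial K, IsLimKeyPol ρ φ ∧ m < φ.natDegree

/-- The limit augmentation `[C; φ, γ]`, acting on `φ`-expansions by
`ν(Σ_s a_s φ^s) = min_s (ρ_C(a_s) + s γ)`. -/
noncomputable def limAugVal (ρ : ι → Polynomial K → WithTop Λ) (φ : Polynomial K)
    (γ : WithTop Λ) (f : Polynomial K) : WithTop Λ :=
  (Finset.range (f.natDegree + 1)).inf'
    (Finset.nonempty_range_iff.mpr (Nat.succ_ne_zero _))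
    fun s => stableVal ρ (expCoeff φ f s) + s • γ

/-- Equivalence of totally ordered families: mutual cofinality. -/
def FamEquiv {κ : Type*} [LinearOrder κ] (ρ : ι → Polynomial K → WithTop Λ)
    (σ : κ → Polynomial K → WithTop Λ) : Prop :=
  (∀ i : ι, ∃ j : κ, ρ i ≤ σ j) ∧ ∀ j : κ, ∃ i : ι, σ j ≤ ρ i

end Families

end MLV

/-!
All three valuations have the shape `f ↦ min_s (M f s + s δ)`, where `M f s` is the value of the
`s`-th coefficient of an expansion of `f` (in powers of `x - a`, resp. of `φ`), constants keep
their `v`-value and the expanding polynomial has value `δ`.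

An equivalence between the `β`- and the `γ`-valuation fixes the values of constants and sends `β`
to `γ`, so it restricts to an isomorphism `⟨Γ, β⟩ ≃ ⟨Γ, γ⟩`, i.e. `β ∼_sme γ`.

Conversely, all coefficient values `M f s` are torsion modulo `Γ`. For `ω_{a,δ}` they lie in `Γ`;
for an (ordinary or limit) augmentation the coefficients have degree below `deg φ`, and by
induction on the degree every such polynomial has torsion value: otherwise some monic `b` of
smaller degree has a non-torsion value `d`, and the terms of the `b`-expansion of `φ` have
pairwise distinct values `μ(e_s) + s d`. The unique minimal term then makes `φ` `μ`-divide it,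
against `φ` being a key polynomial, or makes the value of `φ` stable, against `φ` being a limit key
polynomial. Now an sme-isomorphism `ι` preserves the sign of every `d + k β` with `n d ∈ Γ`, since
`ι (n (d + k β)) = n (d + k γ)`. Hence `d + k β ↦ d + k γ` is a well-defined order embedding, and
it carries the minimum defining the `β`-valuation to the one defining the `γ`-valuation.
-/

theorem Finset.exists_mem_eq_inf'_of_le_imp_le {ι α β : Type*} [LinearOrder α]
    [LinearOrder β] {t : Finset ι} (ht : t.Nonempty) {g₁ : ι → α} {g₂ : ι → β}
    (h : ∀ i ∈ t, ∀ j ∈ t, g₁ i ≤ g₁ j → g₂ i ≤ g₂ j) :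
    ∃ i ∈ t, t.inf' ht g₁ = g₁ i ∧ t.inf' ht g₂ = g₂ i := by
  obtain ⟨i, hi, hi₁⟩ := Finset.exists_mem_eq_inf' ht g₁
  refine ⟨i, hi, hi₁, le_antisymm (Finset.inf'_le _ hi) (Finset.le_inf' _ _ fun j hj => ?_)⟩
  exact h i hi j hj (hi₁ ▸ Finset.inf'_le _ hj)

theorem AddValuation.map_lt_map_sum_erase {R Γ₀ ι : Type*} [Ring R]
    [LinearOrderedAddCommMonoidWithTop Γ₀] [DecidableEq ι] (v : AddValuation R Γ₀)
    {t : Finset ι} {f : ι → R} {j : ι} (hmin : ∀ i ∈ t, v (f j) ≤ v (f i))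
    (htop : v (f j) ≠ ⊤) (hf : ∀ i ∈ t, v (f j) = v (f i) → i = j) :
    v (f j) < v (∑ i ∈ t.erase j, f i) :=
  v.map_lt_sum htop fun i hi => (hmin i (Finset.mem_of_mem_erase hi)).lt_of_ne
    fun h => Finset.ne_of_mem_erase hi (hf i (Finset.mem_of_mem_erase hi) h)

theorem AddValuation.map_sum_eq_inf' {R Γ₀ ι : Type*} [Ring R]
    [LinearOrderedAddCommMonoidWithTop Γ₀] (v : AddValuation R Γ₀) {t : Finset ι}
    (ht : t.Nonempty) {f : ι → R}
    (hf : ∀ i ∈ t, ∀ j ∈ t, v (f i) = v (f j) → v (f i) ≠ ⊤ → i = j) :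
    v (∑ i ∈ t, f i) = t.inf' ht fun i => v (f i) := by
  classical
  obtain ⟨j, hj, hjmin⟩ := Finset.exists_mem_eq_inf' ht fun i => v (f i)
  have hmin : ∀ i ∈ t, v (f j) ≤ v (f i) := fun i hi => hjmin ▸ Finset.inf'_le _ hi
  rw [hjmin]
  by_cases htop : v (f j) = ⊤
  · exact htop ▸ top_le_iff.1 (v.map_le_sum fun i hi => htop ▸ hmin i hi)
  · rw [← Finset.add_sum_erase t f hj]
    exact v.map_add_eq_of_lt_left
      (v.map_lt_map_sum_erase hmin htop fun i hi h => (hf j hj i hi h htop).symm)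

theorem AddSubgroup.exists_addEquiv_closure {G : Type*} [AddCommGroup G] [LinearOrder G]
    {S T : Set G} (f : AddSubgroup.closure S →+ G) (hf : StrictMono f)
    (hT : f '' ((↑) ⁻¹' S) = T) :
    ∃ e : AddSubgroup.closure S ≃+ AddSubgroup.closure T, Monotone e ∧ ∀ x, (e x : G) = f x := by
  have hrange : f.range = AddSubgroup.closure T := by
    rw [AddMonoidHom.range_eq_map, ← AddSubgroup.closure_closure_coe_preimage,
      AddMonoidHom.map_closure, hT]
  exact ⟨(AddMonoidHom.ofInjective hf.injective).trans (AddEquiv.addSubgroupCongr hrange),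
    fun x y hxy => hf.monotone hxy, fun x => rfl⟩

theorem AddMonoidHom.exists_strictMono_range_of_nonneg_iff {G P : Type*} [AddCommGroup G]
    [LinearOrder G] [IsOrderedAddMonoid G] [AddCommGroup P] (φ ψ : P →+ G)
    (h : ∀ p, 0 ≤ φ p ↔ 0 ≤ ψ p) :
    ∃ F : φ.range →+ G, StrictMono F ∧ ∀ p, F ⟨φ p, p, rfl⟩ = ψ p := by
  have hle : ∀ p q, φ p ≤ φ q ↔ ψ p ≤ ψ q := fun p q => by
    simpa only [map_sub, sub_nonneg] using h (q - p)
  have hker : φ.ker ≤ ψ.ker := fun p hp => by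
    rw [AddMonoidHom.mem_ker] at hp ⊢
    have h0 := map_zero ψ
    exact le_antisymm (h0 ▸ (hle p 0).1 (by rw [hp, map_zero]))
      (h0 ▸ (hle 0 p).1 (by rw [hp, map_zero]))
  set F := (QuotientAddGroup.lift φ.ker ψ hker).comp
    (QuotientAddGroup.quotientKerEquivRange φ).symm.toAddMonoidHom
  have hF : ∀ p, F ⟨φ p, p, rfl⟩ = ψ p := fun p => by
    have : (QuotientAddGroup.quotientKerEquivRange φ).symm ⟨φ p, p, rfl⟩ = (p : P ⧸ φ.ker) :=
      (AddEquiv.symm_apply_eq _).2 rfl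
    simp [F, this]
  refine ⟨F, ?_, hF⟩
  rintro ⟨_, p, rfl⟩ ⟨_, q, rfl⟩ hpq
  rw [hF, hF]
  exact lt_of_le_not_ge ((hle p q).1 hpq.le) fun h => hpq.not_ge ((hle q p).2 h)

theorem Polynomial.divByMonic_divByMonic {R : Type*} [CommRing R] [IsDomain R] {p q : R[X]}
    (hp : p.Monic) (hq : q.Monic) (f : R[X]) : f /ₘ p /ₘ q = f /ₘ (p * q) := by
  refine (div_modByMonic_unique (f /ₘ p /ₘ q) (p * (f /ₘ p %ₘ q) + f %ₘ p) (hp.mul hq)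
    ⟨?_, ?_⟩).1.symm
  · linear_combination modByMonic_add_div f p + p * modByMonic_add_div (f /ₘ p) q
  · have hp0 : p.degree ≠ ⊥ := by simpa using hp.ne_zero
    rw [hq.degree_mul]
    refine (degree_add_le _ _).trans_lt (max_lt ?_ ?_)
    · rw [degree_mul]
      exact WithBot.add_lt_add_left hp0 (degree_modByMonic_lt _ hq)
    · exact (degree_modByMonic_lt _ hp).trans_le
        (le_add_of_nonneg_right (zero_le_degree_iff.2 hq.ne_zero))

namespace MLV

open Filter

variable {K : Type*} [Field K]

section Expansion

theorem sum_expCoeff_mul_pow_add {b : Polynomial K} (hb : b.Monic) (f : Polynomial K) (n : ℕ) :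
    ∑ s ∈ Finset.range n, expCoeff b f s * b ^ s + f /ₘ b ^ n * b ^ n = f := by
  induction n with
  | zero => simp
  | succ n ih =>
    rw [Finset.sum_range_succ, pow_succ, ← divByMonic_divByMonic (hb.pow n) hb]
    simp only [expCoeff] at ih ⊢
    linear_combination ih + b ^ n * modByMonic_add_div (f /ₘ b ^ n) b

theorem sum_expCoeff_mul_pow {b f : Polynomial K} (hb : b.Monic) (hb0 : 0 < b.natDegree) {N : ℕ}
    (hf : f.natDegree ≤ N) : ∑ s ∈ Finset.range (N + 1), expCoeff b f s * b ^ s = f := by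
  have hdiv : f /ₘ b ^ (N + 1) = 0 := by
    refine (divByMonic_eq_zero_iff (hb.pow _)).2 (degree_lt_degree ?_)
    rw [hb.natDegree_pow]
    nlinarith
  simpa [hdiv] using sum_expCoeff_mul_pow_add hb f (N + 1)

theorem natDegree_expCoeff_lt {b : Polynomial K} (hb : b.Monic) (hb0 : 0 < b.natDegree)
    (f : Polynomial K) (s : ℕ) : (expCoeff b f s).natDegree < b.natDegree :=
  natDegree_modByMonic_lt _ hb fun h => by simp [h] at hb0

theorem expCoeff_C {φ : Polynomial K} (hφ : φ.Monic) (hφ0 : 0 < φ.natDegree) (c : K) :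
    expCoeff φ (C c) 0 = C c := by
  rw [expCoeff, pow_zero, divByMonic_one, modByMonic_eq_self_iff hφ]
  exact degree_lt_degree (by simpa using hφ0)

theorem expCoeff_self_one {φ : Polynomial K} (hφ : φ.Monic) (hφ0 : 0 < φ.natDegree) :
    expCoeff φ φ 1 = 1 := by
  have : φ /ₘ φ = 1 := by simpa using mul_divByMonic_cancel_left 1 hφ
  rw [expCoeff, pow_one, this, modByMonic_eq_self_iff hφ]
  exact degree_lt_degree (by simpa using hφ0)

theorem expCoeff_self_of_ne_one {φ : Polynomial K} (hφ : φ.Monic) (hφ0 : 0 < φ.natDegree)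
    {s : ℕ} (hs : s ≠ 1) : expCoeff φ φ s = 0 := by
  rcases Nat.lt_or_gt_of_ne hs with hs | hs
  · rw [Nat.lt_one_iff.1 hs, expCoeff, pow_zero, divByMonic_one, modByMonic_self hφ]
  · have : φ /ₘ φ ^ s = 0 := by
      refine (divByMonic_eq_zero_iff (hφ.pow s)).2 (degree_lt_degree ?_)
      rw [hφ.natDegree_pow]
      nlinarith
    rw [expCoeff, this, zero_modByMonic]

end Expansion

section Stable

variable {Λ ι : Type*} [LinearOrder ι] {ρ : ι → Polynomial K → WithTop Λ} {f : Polynomial K}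
  {w : WithTop Λ}

theorem IsLimKeyPol.isStablePoly {φ : Polynomial K} (hφ : IsLimKeyPol ρ φ) {a : Polynomial K}
    (ha : a.natDegree < φ.natDegree) : IsStablePoly ρ a :=
  by_contra fun h => (hφ.2.2 a h).not_gt ha

variable [Nonempty ι]

theorem isStablePoly_of_eventually (h : ∀ᶠ i in atTop, ρ i f = w) : IsStablePoly ρ f := by
  obtain ⟨i, hi⟩ := eventually_atTop.1 h
  exact ⟨i, fun j hj => (hi j hj).trans (hi i le_rfl).symm⟩

theorem stableVal_eq_of_eventually (h : ∀ᶠ i in atTop, ρ i f = w) : stableVal ρ f = w := by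
  have hex : ∃ w', IsStableVal ρ f w' := ⟨w, eventually_atTop.1 h⟩
  rw [stableVal, dif_pos hex]
  obtain ⟨i, hi⟩ := (h.and (eventually_atTop.2 hex.choose_spec)).exists
  exact hi.2.symm.trans hi.1

theorem stableVal_eq_of_forall (h : ∀ i, ρ i f = w) : stableVal ρ f = w :=
  stableVal_eq_of_eventually (Eventually.of_forall h)

theorem IsStablePoly.eventually_eq_stableVal (h : IsStablePoly ρ f) :
    ∀ᶠ i in atTop, ρ i f = stableVal ρ f := by
  obtain ⟨i, hi⟩ := h
  have hev : ∀ᶠ j in atTop, ρ j f = ρ i f := eventually_atTop.2 ⟨i, hi⟩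
  exact (stableVal_eq_of_eventually hev).symm ▸ hev

end Stable

theorem IsKeyPol.not_muDvd_mul_pow {Λ : Type*} [LinearOrder Λ] {μ : Polynomial K → WithTop Λ}
    {φ : Polynomial K} (hφ : IsKeyPol μ φ) {e b : Polynomial K} (he : e ≠ 0)
    (hed : e.degree < φ.degree) (hb : b ≠ 0) (hbd : b.degree < φ.degree) (s : ℕ) :
    ¬ MuDvd μ φ (e * b ^ s) := by
  obtain ⟨-, ⟨-, hmin⟩, -, -, hprime⟩ := hφ
  induction s with
  | zero => simpa using hmin e he hed
  | succ s ih =>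
    intro hdvd
    rw [pow_succ, ← mul_assoc] at hdvd
    exact (hprime _ _ hdvd).elim ih (hmin b hb hbd)

theorem valEquiv_of_strictMono {Λ : Type*} [AddCommGroup Λ] [LinearOrder Λ]
    {μ ν : Polynomial K → WithTop Λ} (F : valGroup μ →+ Λ) (hF : StrictMono F)
    (hν : ∀ f (x : Λ) (h : μ f = x), ν f = F ⟨x, AddSubgroup.subset_closure ⟨f, h⟩⟩)
    (htop : ∀ f, μ f = ⊤ → ν f = ⊤) : ValEquiv μ ν := by
  have hT : F '' ((↑) ⁻¹' valSet μ) = valSet ν := by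
    ext y
    constructor
    · rintro ⟨⟨x, hx⟩, ⟨f, hf⟩, rfl⟩
      exact ⟨f, hν f x hf⟩
    · rintro ⟨f, hf⟩
      obtain ⟨x, hx⟩ := WithTop.ne_top_iff_exists.1 fun h => by simp [htop f h] at hf
      exact ⟨⟨x, AddSubgroup.subset_closure ⟨f, hx.symm⟩⟩, ⟨f, hx.symm⟩,
        WithTop.coe_injective ((hν f x hx.symm).symm.trans hf)⟩
  obtain ⟨e, he, hef⟩ := AddSubgroup.exists_addEquiv_closure F hF hT
  refine ⟨e, he, fun f => ⟨htop f, fun h => ?_⟩,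
    fun f x h => (hν f x h).trans (congrArg _ (hef _).symm)⟩
  by_contra hμ
  obtain ⟨x, hx⟩ := WithTop.ne_top_iff_exists.1 hμ
  simp [hν f x hx.symm] at h

variable {Λ : Type*} [AddCommGroup Λ] [LinearOrder Λ] [IsOrderedAddMonoid Λ]

def divHull (v : FieldVal K Λ) : AddSubgroup Λ :=
  (AddCommGroup.torsion (Λ ⧸ baseGroup v)).comap (QuotientAddGroup.mk' (baseGroup v))

def divHullTop (v : FieldVal K Λ) : Set (WithTop Λ) :=
  {w | ∀ x : Λ, w = x → x ∈ divHull v}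

section DivHull

variable {v : FieldVal K Λ}

theorem mem_divHull {x : Λ} : x ∈ divHull v ↔ ∃ n : ℕ, 0 < n ∧ n • x ∈ baseGroup v := by
  simp [divHull, AddCommGroup.mem_torsion, isOfFinAddOrder_iff_nsmul_eq_zero,
    ← QuotientAddGroup.mk_nsmul, QuotientAddGroup.eq_zero_iff]

theorem baseGroup_le_divHull : baseGroup v ≤ divHull v :=
  fun x hx => mem_divHull.2 ⟨1, one_pos, by rwa [one_smul]⟩

theorem mem_divHull_of_zsmul_mem {x : Λ} {k : ℤ} (hk : k ≠ 0) (h : k • x ∈ divHull v) :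
    x ∈ divHull v := by
  have hn : k.natAbs • x ∈ divHull v := by
    rcases Int.natAbs_eq k with h' | h'
    · rwa [h', natCast_zsmul] at h
    · rwa [h', neg_smul, neg_mem_iff, natCast_zsmul] at h
  simp only [divHull, AddSubgroup.mem_comap, AddCommGroup.mem_torsion, map_nsmul] at hn ⊢
  exact hn.of_nsmul (Int.natAbs_ne_zero.2 hk)

theorem eq_of_add_nsmul_eq_add_nsmul {x y d : Λ} (hx : x ∈ divHull v) (hy : y ∈ divHull v)
    (hd : d ∉ divHull v) {s t : ℕ} (h : x + s • d = y + t • d) : s = t := by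
  by_contra hst
  have hdiff : ((s : ℤ) - t) • d = y - x := by
    rw [sub_smul, natCast_zsmul, natCast_zsmul, sub_eq_sub_iff_add_eq_add, add_comm, h]
  exact hd (mem_divHull_of_zsmul_mem (sub_ne_zero.2 (by exact_mod_cast hst))
    (hdiff ▸ sub_mem hy hx))

theorem top_mem_divHullTop : (⊤ : WithTop Λ) ∈ divHullTop v :=
  fun _ h => absurd h.symm WithTop.coe_ne_top

theorem zero_mem_divHullTop : (0 : WithTop Λ) ∈ divHullTop v :=
  fun _ hx => WithTop.coe_inj.1 hx.symm ▸ zero_mem _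

theorem val_mem_divHullTop (c : K) : v.v c ∈ divHullTop v :=
  fun _ hx => baseGroup_le_divHull (AddSubgroup.subset_closure ⟨c, hx⟩)

theorem add_mem_divHullTop {w w' : WithTop Λ} (hw : w ∈ divHullTop v) (hw' : w' ∈ divHullTop v) :
    w + w' ∈ divHullTop v := by
  induction w using WithTop.recTopCoe with
  | top => simpa using top_mem_divHullTop
  | coe x =>
    induction w' using WithTop.recTopCoe with
    | top => simpa using top_mem_divHullTop
    | coe y =>
      rintro z hz
      rw [← WithTop.coe_add, WithTop.coe_inj] at hz
      exact hz ▸ add_mem (hw x rfl) (hw' y rfl)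

end DivHull

section Valuations

variable {v : FieldVal K Λ} {μ : Polynomial K → WithTop Λ}

noncomputable def IsValT.toAddValuation (hμ : IsValT v μ) :
    AddValuation (Polynomial K) (WithTop Λ) :=
  AddValuation.of μ hμ.2.1 hμ.1 hμ.2.2.2.1 hμ.2.2.1

theorem IsValT.map_zero (hμ : IsValT v μ) : μ 0 = ⊤ := hμ.2.1

theorem IsValT.map_one (hμ : IsValT v μ) : μ 1 = 0 := hμ.1

theorem IsValT.map_C (hμ : IsValT v μ) (c : K) : μ (C c) = v.v c := hμ.2.2.2.2 c

theorem IsValT.map_mul (hμ : IsValT v μ) (f g : Polynomial K) : μ (f * g) = μ f + μ g :=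
  hμ.2.2.1 f g

theorem IsValT.map_mul_pow (hμ : IsValT v μ) (e b : Polynomial K) (s : ℕ) :
    μ (e * b ^ s) = μ e + s • μ b :=
  (hμ.toAddValuation.map_mul e (b ^ s)).trans (congrArg _ (hμ.toAddValuation.map_pow b s))

theorem IsValT.eq_of_map_mul_pow_eq (hμ : IsValT v μ) {b : Polynomial K} {d : Λ} (hb : μ b = d)
    (hd : d ∉ divHull v) {e e' : Polynomial K} (he : μ e ∈ divHullTop v)
    (he' : μ e' ∈ divHullTop v) {s t : ℕ} (h : μ (e * b ^ s) = μ (e' * b ^ t))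
    (htop : μ (e * b ^ s) ≠ ⊤) : s = t := by
  simp only [hμ.map_mul_pow, hb] at h htop
  induction hx : μ e using WithTop.recTopCoe with
  | top => simp [hx] at htop
  | coe x =>
    induction hy : μ e' using WithTop.recTopCoe with
    | top => simp [hx, hy, ← WithTop.coe_nsmul] at h
    | coe y =>
      rw [hx, hy, ← WithTop.coe_nsmul, ← WithTop.coe_nsmul, ← WithTop.coe_add,
        ← WithTop.coe_add, WithTop.coe_inj] at h
      exact eq_of_add_nsmul_eq_add_nsmul (he x hx) (he' y hy) hd h

end Valuations

theorem mem_divHullTop_of_monic_induction {v : FieldVal K Λ} {ν : Polynomial K → WithTop Λ}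
    {n : ℕ} (h0 : ν 0 = ⊤) (h1 : ν 1 = 0)
    (hC : ∀ c b, b.natDegree < n → ν (C c * b) = v.v c + ν b)
    (hmonic : ∀ b : Polynomial K, b.Monic → 0 < b.natDegree → b.natDegree < n →
      (∀ e : Polynomial K, e.natDegree < b.natDegree → ν e ∈ divHullTop v) →
        ν b ∈ divHullTop v)
    {a : Polynomial K} (ha : a.natDegree < n) : ν a ∈ divHullTop v := by
  induction hk : a.natDegree using Nat.strong_induction_on generalizing a with
  | _ k ih =>
  rcases eq_or_ne a 0 with rfl | ha0
  · exact h0 ▸ top_mem_divHullTop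
  set b := a * C a.leadingCoeff⁻¹
  have hb : b.Monic := monic_mul_leadingCoeff_inv ha0
  have hbk : b.natDegree = k := (natDegree_mul_leadingCoeff_inv a ha0).trans hk
  have hab : a = C a.leadingCoeff * b := by
    rw [mul_left_comm, ← C_mul, mul_inv_cancel₀ (leadingCoeff_ne_zero.2 ha0), C_1, mul_one]
  rw [hab, hC _ _ (by omega)]
  refine add_mem_divHullTop (val_mem_divHullTop _) ?_
  rcases Nat.eq_zero_or_pos b.natDegree with hb0 | hb0
  · exact hb.natDegree_eq_zero.1 hb0 ▸ h1 ▸ zero_mem_divHullTop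
  · exact hmonic b hb hb0 (by omega) fun e he => ih _ (by omega) (by omega) rfl

section KeyPolynomials

variable {v : FieldVal K Λ} {μ : Polynomial K → WithTop Λ} {φ : Polynomial K}

/-- If `μ b` is not torsion modulo `Γ`, the terms of the `b`-expansion of `φ` have pairwise
distinct values, so `φ` would `μ`-divide the minimal one, against `μ`-irreducibility and
`μ`-minimality. -/
theorem IsKeyPol.map_mem_divHullTop_of_monic (hμ : IsValT v μ) (hφ : IsKeyPol μ φ)
    {b : Polynomial K} (hb : b.Monic) (hb0 : 0 < b.natDegree) (hbφ : b.natDegree < φ.natDegree)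
    (ih : ∀ e : Polynomial K, e.natDegree < b.natDegree → μ e ∈ divHullTop v) :
    μ b ∈ divHullTop v := by
  classical
  intro d hd
  by_contra hdD
  set e := fun s => expCoeff b φ s
  set t := Finset.range (φ.natDegree + 1)
  have hsum : ∑ s ∈ t, e s * b ^ s = φ := sum_expCoeff_mul_pow hb hb0 le_rfl
  have he : ∀ s, μ (e s) ∈ divHullTop v := fun s => ih _ (natDegree_expCoeff_lt hb hb0 φ s)
  obtain ⟨s₀, hs₀, hmin⟩ := t.exists_min_image (fun s => μ (e s * b ^ s)) ⟨0, by simp [t]⟩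
  have hφtop : μ φ ≠ ⊤ := hφ.2.2.1
  have htop : μ (e s₀ * b ^ s₀) ≠ ⊤ := fun h => hφtop <| by
    rw [← hsum]
    exact top_le_iff.1 (hμ.toAddValuation.map_le_sum fun s hs => h ▸ hmin s hs)
  have hdvd : MuDvd μ φ (e s₀ * b ^ s₀) := by
    refine ⟨1, ?_⟩
    rw [MuEquiv, one_mul, ← hsum, ← Finset.add_sum_erase t _ hs₀, sub_add_cancel_left]
    rw [show μ (-_) = μ _ from hμ.toAddValuation.map_neg _]
    exact hμ.toAddValuation.map_lt_map_sum_erase hmin htop fun s hs h =>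
      (hμ.eq_of_map_mul_pow_eq hd hdD (he _) (he _) h htop).symm
  have he0 : e s₀ ≠ 0 := fun h0 => htop (by rw [h0, zero_mul, hμ.map_zero])
  exact hφ.not_muDvd_mul_pow he0
    (degree_lt_degree ((natDegree_expCoeff_lt hb hb0 φ s₀).trans hbφ)) hb.ne_zero
    (degree_lt_degree hbφ) s₀ hdvd

theorem IsKeyPol.map_mem_divHullTop (hμ : IsValT v μ) (hφ : IsKeyPol μ φ) {a : Polynomial K}
    (ha : a.natDegree < φ.natDegree) : μ a ∈ divHullTop v :=
  mem_divHullTop_of_monic_induction hμ.map_zero hμ.map_one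
    (fun c b _ => by rw [hμ.map_mul, hμ.map_C])
    (fun _ hb hb0 hbφ ih => hφ.map_mem_divHullTop_of_monic hμ hb hb0 hbφ ih) ha

end KeyPolynomials

section LimitKeyPolynomials

variable {ι : Type*} [LinearOrder ι] [Nonempty ι] {ρ : ι → Polynomial K → WithTop Λ}
  {v : FieldVal K Λ} {φ : Polynomial K}

theorem IsLimKeyPol.natDegree_pos (hval : ∀ i, IsValT v (ρ i)) (hφ : IsLimKeyPol ρ φ) :
    0 < φ.natDegree := by
  refine Nat.pos_of_ne_zero fun h => hφ.2.1 (isStablePoly_of_eventually (w := v.v (φ.coeff 0))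
    (Eventually.of_forall fun i => ?_))
  conv_lhs => rw [eq_C_of_natDegree_eq_zero h]
  exact (hval i).map_C _

/-- If the stable value `d` of `b` is not torsion modulo `Γ`, the terms of the `b`-expansion of
`φ` have eventually constant, pairwise distinct values, so eventually `ρ i φ` is their minimum and
`φ` would be stable. -/
theorem IsLimKeyPol.stableVal_mem_divHullTop_of_monic (hval : ∀ i, IsValT v (ρ i))
    (hφ : IsLimKeyPol ρ φ) {b : Polynomial K} (hb : b.Monic) (hb0 : 0 < b.natDegree)
    (hbφ : b.natDegree < φ.natDegree)
    (ih : ∀ e : Polynomial K, e.natDegree < b.natDegree → stableVal ρ e ∈ divHullTop v) :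
    stableVal ρ b ∈ divHullTop v := by
  intro d hd
  by_contra hdD
  set e := fun s => expCoeff b φ s
  set t := Finset.range (φ.natDegree + 1)
  have hsum : ∑ s ∈ t, e s * b ^ s = φ := sum_expCoeff_mul_pow hb hb0 le_rfl
  have hedeg : ∀ s, (e s).natDegree < b.natDegree := natDegree_expCoeff_lt hb hb0 φ
  have he : ∀ᶠ i in atTop, ∀ s ∈ t, ρ i (e s) = stableVal ρ (e s) :=
    (eventually_all_finset t).2 fun s _ =>
      (hφ.isStablePoly ((hedeg s).trans hbφ)).eventually_eq_stableVal
  have hbev : ∀ᶠ i in atTop, ρ i b = d := hd ▸ (hφ.isStablePoly hbφ).eventually_eq_stableVal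
  refine hφ.2.1 (isStablePoly_of_eventually (w := t.inf' ⟨0, by simp [t]⟩
    fun s => stableVal ρ (e s) + s • (d : WithTop Λ)) ?_)
  filter_upwards [he, hbev] with i hi hbi
  have hterm : ∀ s ∈ t, ρ i (e s * b ^ s) = stableVal ρ (e s) + s • (d : WithTop Λ) :=
    fun s hs => by rw [(hval i).map_mul_pow, hi s hs, hbi]
  conv_lhs => rw [← hsum]
  rw [show ρ i (∑ s ∈ t, e s * b ^ s) = (hval i).toAddValuation _ from rfl,
    AddValuation.map_sum_eq_inf' _ ⟨0, by simp [t]⟩ fun s hs s' hs' h htop =>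
      (hval i).eq_of_map_mul_pow_eq hbi hdD (hi s hs ▸ ih _ (hedeg s))
        (hi s' hs' ▸ ih _ (hedeg s')) h htop]
  exact Finset.inf'_congr _ rfl hterm

theorem IsLimKeyPol.stableVal_mem_divHullTop (hval : ∀ i, IsValT v (ρ i)) (hφ : IsLimKeyPol ρ φ)
    {a : Polynomial K} (ha : a.natDegree < φ.natDegree) : stableVal ρ a ∈ divHullTop v := by
  refine mem_divHullTop_of_monic_induction (stableVal_eq_of_forall fun i => (hval i).map_zero)
    (stableVal_eq_of_forall fun i => (hval i).map_one) (fun c b hb => ?_)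
    (fun _ hb hb0 hbφ ih => hφ.stableVal_mem_divHullTop_of_monic hval hb hb0 hbφ ih) ha
  refine stableVal_eq_of_eventually ?_
  filter_upwards [(hφ.isStablePoly hb).eventually_eq_stableVal] with i hi
  rw [(hval i).map_mul, (hval i).map_C, hi]

end LimitKeyPolynomials

section Equivalences

variable {v : FieldVal K Λ} {β γ : Λ}

theorem SmeEquiv.nonneg_iff (h : SmeEquiv v β γ) {x : Λ} (hx : x ∈ divHull v) (k : ℤ) :
    0 ≤ x + k • β ↔ 0 ≤ x + k • γ := by
  obtain ⟨ι, hmono, hfix, hβ⟩ := h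
  have hbase : baseGroup v ≤ AddSubgroup.closure (gammaSet v ∪ {β}) :=
    AddSubgroup.closure_mono Set.subset_union_left
  have hfixB : ∀ y (hy : y ∈ baseGroup v), (ι ⟨y, hbase hy⟩ : Λ) = y := by
    intro y hy
    induction hy using AddSubgroup.closure_induction with
    | mem y hy => exact hfix y hy
    | zero => exact congrArg Subtype.val (map_zero ι)
    | add y z hy hz ihy ihz =>
      show (ι (⟨y, hbase hy⟩ + ⟨z, hbase hz⟩) : Λ) = y + z
      rw [map_add, AddSubgroup.coe_add, ihy, ihz]
    | neg y hy ihy =>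
      show (ι (-⟨y, hbase hy⟩) : Λ) = -y
      rw [map_neg, AddSubgroup.coe_neg, ihy]
  obtain ⟨n, hn, hnx⟩ := mem_divHull.1 hx
  set z : AddSubgroup.closure (gammaSet v ∪ {β}) := ⟨n • x, hbase hnx⟩ +
    ((n : ℤ) * k) • ⟨β, AddSubgroup.subset_closure (Set.mem_union_right _ rfl)⟩
  have hz : (z : Λ) = n • (x + k • β) := by
    simp [z, smul_add, mul_smul, natCast_zsmul]
  have hιz : (ι z : Λ) = n • (x + k • γ) := by
    simp only [z, map_add, map_zsmul, AddSubgroup.coe_add, AddSubgroup.coe_zsmul, hβ]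
    rw [hfixB _ hnx]
    simp [smul_add, mul_smul, natCast_zsmul]
  have hιmono : StrictMono ι := hmono.strictMono_of_injective ι.injective
  have h0 := hιmono.le_iff_le (a := 0) (b := z)
  rw [map_zero] at h0
  rw [← nsmul_nonneg_iff hn.ne', ← hz, ← nsmul_nonneg_iff hn.ne' (x := x + k • γ), ← hιz]
  exact h0.symm

theorem SmeEquiv.add_nsmul_le_add_nsmul (h : SmeEquiv v β γ) {x y : WithTop Λ}
    (hx : x ∈ divHullTop v) (hy : y ∈ divHullTop v) {s t : ℕ}
    (hle : x + s • (β : WithTop Λ) ≤ y + t • (β : WithTop Λ)) :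
    x + s • (γ : WithTop Λ) ≤ y + t • (γ : WithTop Λ) := by
  induction y using WithTop.recTopCoe with
  | top => simp
  | coe y =>
    induction x using WithTop.recTopCoe with
    | top => simp [← WithTop.coe_nsmul, ← WithTop.coe_add] at hle
    | coe x =>
      have key : ∀ δ : Λ, x + s • δ ≤ y + t • δ ↔ 0 ≤ (y - x) + ((t : ℤ) - s) • δ := fun δ => by
        rw [← sub_nonneg, sub_smul, natCast_zsmul, natCast_zsmul]
        abel_nf
      simp only [← WithTop.coe_nsmul, ← WithTop.coe_add, WithTop.coe_le_coe] at hle ⊢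
      exact (key γ).2 ((h.nonneg_iff (sub_mem (hy y rfl) (hx x rfl)) _).1 ((key β).1 hle))

theorem smeEquiv_of_valEquiv {μ ν : Polynomial K → WithTop Λ} (h : ValEquiv μ ν)
    (hμC : ∀ c, μ (C c) = v.v c) (hνC : ∀ c, ν (C c) = v.v c) {φ : Polynomial K}
    (hμφ : μ φ = β) (hνφ : ν φ = γ) : SmeEquiv v β γ := by
  obtain ⟨ι, hmono, -, hval⟩ := h
  have hle : AddSubgroup.closure (gammaSet v ∪ {β}) ≤ valGroup μ := by
    refine (AddSubgroup.closure_le _).2 ?_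
    rintro x (⟨c, hc⟩ | rfl)
    · exact AddSubgroup.subset_closure ⟨C c, (hμC c).trans hc⟩
    · exact AddSubgroup.subset_closure ⟨φ, hμφ⟩
  set F := (valGroup ν).subtype.comp (ι.toAddMonoidHom.comp (AddSubgroup.inclusion hle))
  have hF : StrictMono F := fun x y hxy => hmono.strictMono_of_injective ι.injective
    (show (⟨x, hle x.2⟩ : valGroup μ) < ⟨y, hle y.2⟩ from hxy)
  have hFC : ∀ c (x : Λ) (hx : v.v c = x),
      F ⟨x, AddSubgroup.subset_closure (Or.inl ⟨c, hx⟩)⟩ = x := by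
    intro c x hx
    have := hval (C c) x ((hμC c).trans hx)
    rw [hνC] at this
    exact WithTop.coe_injective (this.symm.trans hx)
  have hFφ : F ⟨β, AddSubgroup.subset_closure (Or.inr rfl)⟩ = γ := by
    have := hval φ β hμφ
    rw [hνφ] at this
    exact (WithTop.coe_injective this).symm
  have hT : F '' ((↑) ⁻¹' (gammaSet v ∪ {β})) = gammaSet v ∪ {γ} := by
    ext y
    constructor
    · rintro ⟨⟨x, hx⟩, (⟨c, hc⟩ | hxβ), rfl⟩
      · exact Or.inl (by rw [hFC c x hc]; exact ⟨c, hc⟩)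
      · change x = β at hxβ
        subst x
        exact Or.inr hFφ
    · rintro (⟨c, hc⟩ | rfl)
      · exact ⟨⟨y, _⟩, Or.inl ⟨c, hc⟩, hFC c y hc⟩
      · exact ⟨⟨β, _⟩, Or.inr rfl, hFφ⟩
  obtain ⟨e, he, hef⟩ := AddSubgroup.exists_addEquiv_closure F hF hT
  exact ⟨e, he, fun a ⟨c, hc⟩ => (hef _).trans (hFC c a hc), (hef _).trans hFφ⟩

end Equivalences

/-- The valuation `f ↦ min_s (M f s + s δ)`; `omegaVal`, `augVal` and `limAugVal` are
definitionally of this form. -/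
noncomputable def expansionVal (M : Polynomial K → ℕ → WithTop Λ) (δ : WithTop Λ)
    (f : Polynomial K) : WithTop Λ :=
  (Finset.range (f.natDegree + 1)).inf'
    (Finset.nonempty_range_iff.mpr (Nat.succ_ne_zero _))
    fun s => M f s + s • δ

section ExpansionVal

variable {v : FieldVal K Λ} {M : Polynomial K → ℕ → WithTop Λ} {β γ : Λ}

theorem expansionVal_C {c : K} (hc : M (C c) 0 = v.v c) (δ : WithTop Λ) :
    expansionVal M δ (C c) = v.v c := by
  simp [expansionVal, hc]

theorem expansionVal_eq_of_single_one {φ : Polynomial K} (hφ : 0 < φ.natDegree) (h1 : M φ 1 = 0)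
    (hs : ∀ s, s ≠ 1 → M φ s = ⊤) (δ : WithTop Λ) : expansionVal M δ φ = δ := by
  have h1mem : 1 ∈ Finset.range (φ.natDegree + 1) := Finset.mem_range.2 (by omega)
  refine le_antisymm ((Finset.inf'_le _ h1mem).trans_eq ?_) (Finset.le_inf' _ _ fun s _ => ?_)
  · simp [h1]
  · rcases eq_or_ne s 1 with rfl | hs1
    · simp [h1]
    · simp [hs s hs1]

theorem SmeEquiv.exists_expansionVal_eq (h : SmeEquiv v β γ) (hM : ∀ f s, M f s ∈ divHullTop v)
    (f : Polynomial K) : ∃ s, expansionVal M β f = M f s + s • (β : WithTop Λ) ∧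
      expansionVal M γ f = M f s + s • (γ : WithTop Λ) := by
  obtain ⟨s, -, hs⟩ := Finset.exists_mem_eq_inf'_of_le_imp_le _
    fun i _ j _ => h.add_nsmul_le_add_nsmul (hM f i) (hM f j)
  exact ⟨s, hs⟩

theorem valEquiv_expansionVal_of_smeEquiv (h : SmeEquiv v β γ)
    (hM : ∀ f s, M f s ∈ divHullTop v) :
    ValEquiv (expansionVal M β) (expansionVal M γ) := by
  -- `d + k β ↦ d + k γ` (`d ∈ divHull v`) is well defined and strictly monotone on the range of
  -- `L β`, which contains every value of `expansionVal M β`.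
  set L : Λ → divHull v × ℤ →+ Λ := fun δ => (divHull v).subtype.coprod (zmultiplesHom Λ δ)
  have hL : ∀ δ p, L δ p = p.1 + p.2 • δ := fun _ _ => rfl
  obtain ⟨F, hF, hFL⟩ := AddMonoidHom.exists_strictMono_range_of_nonneg_iff (L β) (L γ)
    fun p => h.nonneg_iff p.1.2 p.2
  have hval : ∀ f (x : Λ), expansionVal M β f = x →
      ∃ p, L β p = x ∧ expansionVal M γ f = L γ p := by
    intro f x hx
    obtain ⟨s, hβ, hγ⟩ := h.exists_expansionVal_eq hM f
    induction hMs : M f s using WithTop.recTopCoe with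
    | top =>
      simp only [hMs, top_add] at hβ
      simp [hβ] at hx
    | coe d =>
      refine ⟨(⟨d, hM f s d hMs⟩, s), ?_, ?_⟩
      · rw [hL, ← WithTop.coe_inj, ← hx, hβ, hMs]
        simp
      · rw [hL, hγ, hMs]
        simp
  have hle : valGroup (expansionVal M β) ≤ (L β).range := by
    refine (AddSubgroup.closure_le _).2 ?_
    rintro x ⟨f, hf⟩
    obtain ⟨p, hp, -⟩ := hval f x hf
    exact ⟨p, hp⟩
  refine valEquiv_of_strictMono (F.comp (AddSubgroup.inclusion hle)) (fun x y hxy => hF hxy)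
    (fun f x hx => ?_) (fun f hf => ?_)
  · obtain ⟨p, rfl, hp⟩ := hval f x hx
    rw [hp, ← hFL p]
    rfl
  · obtain ⟨s, hβ, hγ⟩ := h.exists_expansionVal_eq hM f
    rw [hf] at hβ
    rw [hγ, (WithTop.add_eq_top.1 hβ.symm).resolve_right
      (by rw [← WithTop.coe_nsmul]; exact WithTop.coe_ne_top), top_add]

theorem valEquiv_expansionVal_iff (hM : ∀ f s, M f s ∈ divHullTop v)
    (hC : ∀ c, M (C c) 0 = v.v c) {φ : Polynomial K} (hφ : 0 < φ.natDegree) (hφ1 : M φ 1 = 0)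
    (hφs : ∀ s, s ≠ 1 → M φ s = ⊤) :
    ValEquiv (expansionVal M β) (expansionVal M γ) ↔ SmeEquiv v β γ :=
  ⟨fun h => smeEquiv_of_valEquiv h (fun c => expansionVal_C (hC c) _)
      (fun c => expansionVal_C (hC c) _) (expansionVal_eq_of_single_one hφ hφ1 hφs _)
      (expansionVal_eq_of_single_one hφ hφ1 hφs _),
    fun h => valEquiv_expansionVal_of_smeEquiv h hM⟩

end ExpansionVal

theorem valEquiv_expansionVal_expCoeff_iff {v : FieldVal K Λ} {β γ : Λ}
    {ν : Polynomial K → WithTop Λ} (h0 : ν 0 = ⊤) (h1 : ν 1 = 0) (hC : ∀ c, ν (C c) = v.v c)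
    {φ : Polynomial K} (hφ : φ.Monic) (hφ0 : 0 < φ.natDegree)
    (hν : ∀ a : Polynomial K, a.natDegree < φ.natDegree → ν a ∈ divHullTop v) :
    ValEquiv (expansionVal (fun f s => ν (expCoeff φ f s)) β)
        (expansionVal (fun f s => ν (expCoeff φ f s)) γ) ↔ SmeEquiv v β γ :=
  valEquiv_expansionVal_iff (fun f s => hν _ (natDegree_expCoeff_lt hφ hφ0 f s))
    (fun c => by rw [expCoeff_C hφ hφ0, hC]) hφ0 (by rw [expCoeff_self_one hφ hφ0, h1])
    fun _ hs => by rw [expCoeff_self_of_ne_one hφ hφ0 hs, h0]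

theorem valEquiv_omegaVal_iff (v : FieldVal K Λ) (a : K) (β γ : Λ) :
    ValEquiv (omegaVal v a β) (omegaVal v a γ) ↔ SmeEquiv v β γ := by
  have htaylor : taylor a (X - C a) = X := by simp
  refine valEquiv_expansionVal_iff (fun f s => val_mem_divHullTop _) (fun c => by simp)
    (φ := X - C a) (by simp) (by simp [htaylor, v.map_one']) fun s hs => ?_
  simp [htaylor, coeff_X, Ne.symm hs, v.map_zero']

theorem valEquiv_augVal_iff {v : FieldVal K Λ} {μ : Polynomial K → WithTop Λ} (hμ : IsValT v μ)
    {φ : Polynomial K} (hφ : IsKeyPol μ φ) (β γ : Λ) :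
    ValEquiv (augVal μ φ β) (augVal μ φ γ) ↔ SmeEquiv v β γ :=
  valEquiv_expansionVal_expCoeff_iff hμ.map_zero hμ.map_one hμ.map_C hφ.1 hφ.2.1.1
    fun _ => hφ.map_mem_divHullTop hμ

theorem valEquiv_limAugVal_iff {ι : Type*} [LinearOrder ι] [Nonempty ι] {v : FieldVal K Λ}
    {ρ : ι → Polynomial K → WithTop Λ} (hval : ∀ i, IsValT v (ρ i)) {φ : Polynomial K}
    (hφ : IsLimKeyPol ρ φ) (β γ : Λ) :
    ValEquiv (limAugVal ρ φ β) (limAugVal ρ φ γ) ↔ SmeEquiv v β γ :=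
  valEquiv_expansionVal_expCoeff_iff (stableVal_eq_of_forall fun i => (hval i).map_zero)
    (stableVal_eq_of_forall fun i => (hval i).map_one)
    (fun c => stableVal_eq_of_forall fun i => (hval i).map_C c) hφ.1 (hφ.natDegree_pos hval)
    fun _ => hφ.stableVal_mem_divHullTop hval

end MLV

open MLV

/-- Equivalence of depth-zero valuations, ordinary augmentations, and limit augmentations
with the same centre but different values `β, γ` is governed by `β ∼_sme γ`. -/
theorem statement_19 {K : Type*} [Field K] {Λ : Type*} [AddCommGroup Λ] [LinearOrder Λ] [IsOrderedAddMonoid Λ]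
    (v : FieldVal K Λ) (β γ : Λ) :
    (∀ a : K,
      (ValEquiv (omegaVal v a (β : WithTop Λ)) (omegaVal v a (γ : WithTop Λ)) ↔
        SmeEquiv v β γ)) ∧
    (∀ μ : Polynomial K → WithTop Λ, IsValT v μ → IsInnerNode μ →
      ∀ φ : Polynomial K, IsKeyPol μ φ →
        μ φ < (β : WithTop Λ) → μ φ < (γ : WithTop Λ) →
        (ValEquiv (augVal μ φ (β : WithTop Λ)) (augVal μ φ (γ : WithTop Λ)) ↔
          SmeEquiv v β γ)) ∧
    (∀ (ι : Type) (_ : LinearOrder ι) (_ : Nonempty ι)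
        (ρ : ι → Polynomial K → WithTop Λ), IsEssential v ρ →
      ∀ φ : Polynomial K, IsLimKeyPol ρ φ →
        (∀ i : ι, ρ i φ < (β : WithTop Λ)) → (∀ i : ι, ρ i φ < (γ : WithTop Λ)) →
        (ValEquiv (limAugVal ρ φ (β : WithTop Λ)) (limAugVal ρ φ (γ : WithTop Λ)) ↔
          SmeEquiv v β γ)) := by
  exact ⟨fun a => valEquiv_omegaVal_iff v a β γ,
    fun μ hμ _ φ hφ _ _ => valEquiv_augVal_iff hμ hφ β γ,
    fun ι _ _ ρ hρ φ hφ _ _ => valEquiv_limAugVal_iff hρ.1.1 hφ β γ⟩
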